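/- arXiv:2105.02561 — 2 statements merged into one kernel-verified Lean document; each statement's English description precedes it below -/
import Mathlib

section
/- Let T be a triangulated category with a t-structure, let E ∈ T be a derived injective, and let g : A → B be a t-monomorphism (A ∈ T_{≤0} and cone(g) ∈ T_{≥0}). Then the induced map g* : T(B, E) → T(A, E) is surjective; that is, every morphism f : A → E extends along g to a morphism f̃ : B → E with f̃ ∘ g = f. -/
open CategoryTheory Limits Pretriangulated Triangulated Opposite

namespace DGP

universe v u

variable {C : Type u} [Category.{v} C] [Preadditive C] [HasZeroObject C] [HasShift C ℤ]
  [∀ n : ℤ, (shiftFunctor C n).Additive] [Pretriangulated C]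

/-- A morphism `f : A ⟶ B` is a t-monomorphism if its cone lies in `T_{≥0}`. -/
def IsTMono (t : TStructure C) {A B : C} (f : A ⟶ B) : Prop :=
  ∃ (Z : C) (g : B ⟶ Z) (h : Z ⟶ A⟦(1 : ℤ)⟧),
    Triangle.mk f g h ∈ (distTriang C) ∧ t.ge 0 Z

/-- A morphism `f : A ⟶ B` is a t-epimorphism if `cone(f)[-1]` lies in `T_{≤0}`,
equivalently it fits in a distinguished triangle `Z ⟶ A ⟶ B` with `Z ∈ T_{≤0}`. -/
def IsTEpi (t : TStructure C) {A B : C} (f : A ⟶ B) : Prop :=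
  ∃ (Z : C) (g : Z ⟶ A) (h : B ⟶ Z⟦(1 : ℤ)⟧),
    Triangle.mk g f h ∈ (distTriang C) ∧ t.le 0 Z

/-- The heart of a t-structure, as a full subcategory. -/
abbrev Heart (t : TStructure C) := ObjectProperty.FullSubcategory (fun X => t.le 0 X ∧ t.ge 0 X)

/-- The inclusion of the heart. -/
abbrev heartι (t : TStructure C) : Heart t ⥤ C := ObjectProperty.ι _

/-- Truncation data for a t-structure: truncation functors `τ≤n`, `τ≥n` together with
their universal properties and the truncation distinguished triangles. -/
structure TruncData (t : TStructure C) where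
  τle : ℤ → C ⥤ C
  τge : ℤ → C ⥤ C
  τleLE : ∀ (n : ℤ) (X : C), t.le n ((τle n).obj X)
  τgeGE : ∀ (n : ℤ) (X : C), t.ge n ((τge n).obj X)
  ι : ∀ n : ℤ, τle n ⟶ 𝟭 C
  π : ∀ n : ℤ, 𝟭 C ⟶ τge n
  le_univ : ∀ (n : ℤ) (X Y : C), t.le n X →
    Function.Bijective (fun (f : X ⟶ (τle n).obj Y) => f ≫ (ι n).app Y)
  ge_univ : ∀ (n : ℤ) (X Y : C), t.ge n Y →
    Function.Bijective (fun (f : (τge n).obj X ⟶ Y) => (π n).app X ≫ f)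
  δ : ∀ (n : ℤ) (X : C), (τge (n + 1)).obj X ⟶ ((τle n).obj X)⟦(1 : ℤ)⟧
  tri : ∀ (n : ℤ) (X : C),
    Triangle.mk ((ι n).app X) ((π (n + 1)).app X) (δ n X) ∈ distTriang C
  τge_LE : ∀ (n m : ℤ) (X : C), t.le m X → t.le m ((τge n).obj X)

variable {t : TStructure C}

/-- The cohomological functor `H^0 = τ≥0 τ≤0 : C ⥤ Heart t`. -/
def H0 (d : TruncData t) : C ⥤ Heart t :=
  ObjectProperty.lift _ (d.τle 0 ⋙ d.τge 0)
    (fun X => ⟨d.τge_LE 0 0 _ (d.τleLE 0 X), d.τgeGE 0 _⟩)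

/-- The cohomology functors `H^n(X) = H^0(X⟦n⟧)`. -/
def Hn (d : TruncData t) (n : ℤ) : C ⥤ Heart t :=
  shiftFunctor C n ⋙ H0 d

/-- An object `E` is a derived injective if there is an injective object `I` of the heart
and a natural isomorphism `T(−, E) ≅ T^♥(H^0(−), I)`. -/
def IsDerivedInjective (d : TruncData t) (E : C) : Prop :=
  ∃ I : Heart t, Injective I ∧ Nonempty (yoneda.obj E ≅ (H0 d).op ⋙ yoneda.obj I)

/-- The t-structure is non-degenerate if objects with vanishing cohomologies are zero. -/
def NonDegenerate (d : TruncData t) : Prop :=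
  ∀ X : C, (∀ n : ℤ, IsZero ((Hn d n).obj X)) → IsZero X

end DGP

/-!
Rotating the triangle `A ⟶ B ⟶ Z ⟶ A⟦1⟧` gives `Z⟦-1⟧ ⟶ A ⟶ B`, so
`T(B, E) ⟶ T(A, E) ⟶ T(Z⟦-1⟧, E)` is exact. Since `Z⟦-1⟧ ∈ T_{≥1}`, its truncation `τ≤0`
vanishes, hence so does `H^0(Z⟦-1⟧)`, and `T(Z⟦-1⟧, E) ≅ T^♥(H^0(Z⟦-1⟧), I) = 0`.
-/

namespace DGP

variable {C : Type*} [Category C] [Preadditive C] [HasZeroObject C] [HasShift C ℤ]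
  [∀ n : ℤ, (shiftFunctor C n).Additive] [Pretriangulated C] {t : TStructure C}

namespace TruncData

variable (d : TruncData t)

lemma isZero_τle_obj_of_ge {n m : ℤ} (hnm : n < m) {X : C} (hX : t.ge m X) :
    IsZero ((d.τle n).obj X) := by
  have hι : (d.ι n).app X = 0 := t.zero_of_isLE_of_isGE _ n m hnm ⟨d.τleLE n X⟩ ⟨hX⟩
  rw [IsZero.iff_id_eq_zero]
  apply (d.le_univ n _ X (d.τleLE n X)).1
  simp [hι]

lemma isZero_τge_obj (n : ℤ) {X : C} (hX : IsZero X) : IsZero ((d.τge n).obj X) := by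
  rw [IsZero.iff_id_eq_zero]
  exact (d.ge_univ n X _ (d.τgeGE n X)).1 (hX.eq_of_src _ _)

lemma isZero_H0_obj_of_ge_one {X : C} (hX : t.ge 1 X) : IsZero ((H0 d).obj X) :=
  IsZero.of_full_of_faithful_of_isZero (heartι t) _
    (d.isZero_τge_obj 0 (d.isZero_τle_obj_of_ge zero_lt_one hX))

end TruncData

lemma IsDerivedInjective.subsingleton_hom_of_ge_one {d : TruncData t} {E : C}
    (hE : IsDerivedInjective d E) {X : C} (hX : t.ge 1 X) : Subsingleton (X ⟶ E) := by
  obtain ⟨I, -, ⟨α⟩⟩ := hE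
  have : Subsingleton ((H0 d).obj X ⟶ I) := ⟨(d.isZero_H0_obj_of_ge_one hX).eq_of_src⟩
  exact Equiv.subsingleton (β := (H0 d).obj X ⟶ I) (α.app (op X)).toEquiv

lemma IsTMono.surjective_precomp {A B : C} {g : A ⟶ B} (hg : IsTMono t g) {E : C}
    (hE : ∀ X : C, t.ge 1 X → Subsingleton (X ⟶ E)) :
    Function.Surjective (fun f : B ⟶ E => g ≫ f) := by
  obtain ⟨Z, h, δ, hT, hZ⟩ := hg
  intro f
  have := hE _ (t.ge_shift 0 (-1) 1 (by norm_num) Z hZ)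
  obtain ⟨f', hf'⟩ := Triangle.yoneda_exact₂ _ (inv_rot_of_distTriang _ hT) f
    (Subsingleton.elim (α := Z⟦(-1 : ℤ)⟧ ⟶ E) _ _)
  exact ⟨f', hf'.symm⟩

end DGP

open DGP

/-- Let `E` be a derived injective and let `g : A ⟶ B` be a t-monomorphism (`A ∈ T_{≤0}`
and `cone(g) ∈ T_{≥0}`). Then the induced map `g* : T(B, E) → T(A, E)` is surjective;
that is, every morphism `f : A ⟶ E` extends along `g`. -/
theorem stmt8 {C : Type*} [Category C]
    [Preadditive C] [HasZeroObject C] [HasShift C ℤ] [∀ n : ℤ, (shiftFunctor C n).Additive]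
    [Pretriangulated C]
    (t : TStructure C) (d : TruncData t) (E : C) (hE : IsDerivedInjective d E)
    {A B : C} (g : A ⟶ B) (hA : t.le 0 A) (hg : IsTMono t g) :
    Function.Surjective (fun ft : B ⟶ E => g ≫ ft) :=
  hg.surjective_precomp fun _ hX => hE.subsingleton_hom_of_ge_one hX
end

section
/- Let T be a triangulated category with a t-structure satisfying: T has small coproducts; the cohomological functor H^0 : T → T^♥ preserves small coproducts; filtered colimits exist and are exact in the heart T^♥; and there is a small set 𝒰 of objects of T_{≤0} such that every A ∈ T_{≤0} admits a t-epimorphism ⊕_{i∈I} U_i ↠ A with all U_i ∈ 𝒰. Then the heart T^♥ is a Grothendieck abelian category (cocomplete, with exact filtered colimits and a generator), and the set {H^0(U) : U ∈ 𝒰} is a set of generators of T^♥. -/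
open CategoryTheory Limits Pretriangulated Triangulated Opposite

open DGP

/-!
For `X ∈ T_{≤0}` the comparison `X ≅ τ_{≤0} X ⟶ τ_{≥0} τ_{≤0} X = H⁰ X` is universal among maps
from `X` to objects of `T_{≥0}`, and it is an isomorphism when `X` lies in the heart. So
`heartι ⋙ H⁰ ≅ 𝟭`: the heart is a retract of `T`, inherits coproducts from `T` because `H⁰`
preserves them, and being abelian it is cocomplete. If `p : X ⟶ A` is a t-epimorphism, a map
`A ⟶ Y` with `Y ∈ T_{≥0}` killed by `p` factors through `cone(p) ∈ T_{≤-1}` and hence vanishes;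
by the universal property `H⁰ p` is an epimorphism. Since `T_{≤0}`, a left orthogonal, is closed
under coproducts, this applies to `∐ Uᵢ ⟶ A` and shows that the `H⁰ Uᵢ` generate the heart.
-/

lemma hasColimitsOfShape_of_comp_iso_id {J : Type*} [Category J] {C D : Type*} [Category C]
    [Category D] (i : D ⥤ C) (r : C ⥤ D) (e : 𝟭 D ≅ i ⋙ r) [HasColimitsOfShape J C]
    [PreservesColimitsOfShape J r] : HasColimitsOfShape J D where
  has_colimit F :=
    haveI : HasColimit (F ⋙ i ⋙ r) := ⟨⟨_, isColimitOfPreserves r (colimit.isColimit (F ⋙ i))⟩⟩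
    hasColimit_of_iso (Functor.isoWhiskerLeft F e)

namespace DGP

universe v u

variable {C : Type u} [Category.{v} C] [Preadditive C] [HasZeroObject C] [HasShift C ℤ]
  [∀ n : ℤ, (shiftFunctor C n).Additive] [Pretriangulated C] {t : TStructure C}

lemma IsTEpi.hom_ext {A B Y : C} {p : A ⟶ B} (hp : IsTEpi t p)
    (hY : t.ge 0 Y) {q₁ q₂ : B ⟶ Y} (hq : p ≫ q₁ = p ≫ q₂) : q₁ = q₂ := by
  obtain ⟨Z, g, h, hT, hZ⟩ := hp
  rw [← sub_eq_zero, ← Preadditive.comp_sub] at hq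
  rw [← sub_eq_zero]
  obtain ⟨w, hw⟩ := Triangle.yoneda_exact₃ _ hT _ hq
  have hw0 : w = 0 :=
    t.zero_of_isLE_of_isGE w (-1) 0 (by lia) ⟨t.le_shift 0 1 (-1) (by lia) Z hZ⟩ ⟨hY⟩
  rw [hw, hw0]
  exact comp_zero

namespace TruncData

lemma le_of_forall_hom_eq_zero (d : TruncData t) (n : ℤ) {X : C}
    (h : ∀ Y, t.ge (n + 1) Y → ∀ f : X ⟶ Y, f = 0) : t.le n X := by
  have hπ : (d.π (n + 1)).app X = 0 := h _ (d.τgeGE _ X) _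
  have hZero : IsZero ((d.τge (n + 1)).obj X) := by
    rw [IsZero.iff_id_eq_zero]
    apply (d.ge_univ (n + 1) X _ (d.τgeGE _ X)).1
    simp only [hπ, Category.comp_id, comp_zero]
  have : IsIso ((d.ι n).app X) := (Triangle.isZero₃_iff_isIso₁ _ (d.tri n X)).1 hZero
  exact (t.le n).prop_of_iso (asIso ((d.ι n).app X)) (d.τleLE n X)

lemma le_sigma (d : TruncData t) (n : ℤ) {J : Type*} (X : J → C) [HasCoproduct X]
    (hX : ∀ j, t.le n (X j)) : t.le n (∐ X) :=
  d.le_of_forall_hom_eq_zero n fun _ hY _ => Sigma.hom_ext _ _ fun j => by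
    rw [comp_zero]
    exact t.zero_of_isLE_of_isGE _ n (n + 1) (by lia) ⟨hX j⟩ ⟨hY⟩

variable (d : TruncData t)

lemma isIso_ι_app (n : ℤ) {X : C} (hX : t.le n X) : IsIso ((d.ι n).app X) := by
  obtain ⟨s, hs : s ≫ (d.ι n).app X = 𝟙 X⟩ := (d.le_univ n X X hX).2 (𝟙 X)
  refine ⟨s, (d.le_univ n _ X (d.τleLE n X)).1 ?_, hs⟩
  dsimp only
  rw [Category.assoc, hs]
  exact (Category.comp_id _).trans (Category.id_comp _).symm

lemma isIso_π_app (n : ℤ) {X : C} (hX : t.ge n X) : IsIso ((d.π n).app X) := by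
  obtain ⟨s, hs : (d.π n).app X ≫ s = 𝟙 X⟩ := (d.ge_univ n X X hX).2 (𝟙 X)
  refine ⟨s, hs, (d.ge_univ n X _ (d.τgeGE n X)).1 ?_⟩
  simp only [reassoc_of% hs, Category.comp_id]

noncomputable def toH0 {X : C} (hX : t.le 0 X) : X ⟶ (d.τge 0).obj ((d.τle 0).obj X) :=
  haveI := d.isIso_ι_app 0 hX
  inv ((d.ι 0).app X) ≫ (d.π 0).app _

lemma toH0_naturality {X Y : C} (hX : t.le 0 X) (hY : t.le 0 Y) (f : X ⟶ Y) :
    d.toH0 hX ≫ (d.τge 0).map ((d.τle 0).map f) = f ≫ d.toH0 hY := by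
  have := d.isIso_ι_app 0 hX
  have := d.isIso_ι_app 0 hY
  have hι : inv ((d.ι 0).app X) ≫ (d.τle 0).map f = f ≫ inv ((d.ι 0).app Y) := by
    rw [IsIso.eq_comp_inv, Category.assoc, (d.ι 0).naturality f, IsIso.inv_hom_id_assoc]
    rfl
  have hπ := (d.π 0).naturality ((d.τle 0).map f)
  dsimp [toH0] at hπ ⊢
  rw [Category.assoc, ← hπ, reassoc_of% hι]

lemma toH0_comp_injective {X Y : C} (hX : t.le 0 X) (hY : t.ge 0 Y) :
    Function.Injective fun a : (d.τge 0).obj ((d.τle 0).obj X) ⟶ Y => d.toH0 hX ≫ a := by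
  intro a b hab
  have := d.isIso_ι_app 0 hX
  apply (d.ge_univ 0 _ Y hY).1
  simpa only [toH0, Category.assoc, cancel_epi] using hab

lemma isIso_toH0 {X : C} (hX : t.le 0 X) (hX' : t.ge 0 X) : IsIso (d.toH0 hX) := by
  have := d.isIso_ι_app 0 hX
  have := d.isIso_π_app 0 ((t.ge 0).prop_of_iso (asIso ((d.ι 0).app X)).symm hX')
  rw [toH0]
  infer_instance

noncomputable def heartIsoH0 : 𝟭 (Heart t) ≅ heartι t ⋙ H0 d :=
  NatIso.ofComponents
    (fun A => ObjectProperty.isoMk _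
      (@asIso _ _ _ _ (d.toH0 A.property.1) (d.isIso_toH0 A.property.1 A.property.2)))
    (fun {A B} f =>
      ObjectProperty.hom_ext _ (d.toH0_naturality A.property.1 B.property.1 f.hom).symm)

lemma epi_H0_map_of_isTEpi {X A : C} (hX : t.le 0 X) (hA : t.le 0 A) {p : X ⟶ A}
    (hp : IsTEpi t p) : Epi ((H0 d).map p) := by
  refine ⟨fun {Z} a b hab => ObjectProperty.hom_ext _ (d.toH0_comp_injective hA Z.property.2 ?_)⟩
  have hcomp (c : (d.τge 0).obj ((d.τle 0).obj A) ⟶ Z.obj) :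
      p ≫ d.toH0 hA ≫ c = d.toH0 hX ≫ (d.τge 0).map ((d.τle 0).map p) ≫ c := by
    rw [← Category.assoc, ← d.toH0_naturality hX hA, Category.assoc]
  have hab' : (d.τge 0).map ((d.τle 0).map p) ≫ a.hom =
      (d.τge 0).map ((d.τle 0).map p) ≫ b.hom := congrArg InducedCategory.Hom.hom hab
  exact hp.hom_ext Z.property.2
    ((hcomp a.hom).trans ((d.toH0 hX ≫= hab').trans (hcomp b.hom).symm))

end TruncData

end DGP

/-- Let `T` be a triangulated category with a t-structure such that: `T` has small
coproducts; `H^0` preserves small coproducts; filtered colimits exist and are exact in the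
heart; and there is a small family `U : ι → T` of objects of `T_{≤0}` such that every
`A ∈ T_{≤0}` admits a t-epimorphism from a coproduct of objects of the family. Then the
heart is a Grothendieck abelian category: it is cocomplete (filtered colimits being exact
by assumption) and the family `{H^0(U i)}` is a set of generators, i.e. every object of the
heart admits an epimorphism from a coproduct of objects `H^0(U i)`. -/
theorem stmt11 {C : Type u} [Category.{v} C]
    [Preadditive C] [HasZeroObject C] [HasShift C ℤ] [∀ n : ℤ, (shiftFunctor C n).Additive]
    [Pretriangulated C] [HasCoproducts.{v} C]
    (t : TStructure C) (d : TruncData t) [Abelian (Heart t)]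
    (hH0 : ∀ J : Type v, Nonempty (PreservesColimitsOfShape (Discrete J) (H0 d)))
    [HasFilteredColimitsOfSize.{v, v} (Heart t)]
    (hexact : ∀ (J : Type v) [SmallCategory J] [IsFiltered J],
      Nonempty (PreservesFiniteLimits (colim (J := J) (C := Heart t))))
    (ι : Type v) (U : ι → C) (hU : ∀ i, t.le 0 (U i))
    (hgen : ∀ A : C, t.le 0 A →
      ∃ (J : Type v) (g : J → ι) (p : (∐ fun j => U (g j)) ⟶ A), IsTEpi t p) :
    Nonempty (HasColimits (Heart t)) ∧
      ∀ A : Heart t, ∃ (J : Type v) (g : J → ι) (P : Heart t)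
        (inj : ∀ j : J, (H0 d).obj (U (g j)) ⟶ P),
        Nonempty (IsColimit (Cofan.mk P inj)) ∧ ∃ π : P ⟶ A, Epi π := by
  have : HasCoproducts.{v} (Heart t) := fun J =>
    have := (hH0 J).some
    hasColimitsOfShape_of_comp_iso_id (heartι t) (H0 d) d.heartIsoH0
  refine ⟨⟨has_colimits_of_hasCoequalizers_and_coproducts⟩, fun A => ?_⟩
  obtain ⟨J, g, p, hp⟩ := hgen A.obj A.property.1
  have := (hH0 J).some
  have := d.epi_H0_map_of_isTEpi (d.le_sigma 0 _ fun j => hU (g j)) A.property.1 hp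
  exact ⟨J, g, _, _, ⟨isColimitOfHasCoproductOfPreservesColimit (H0 d) _⟩,
    (H0 d).map p ≫ (d.heartIsoH0.app A).inv, inferInstance⟩
end
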